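/- For every a ≥ 0 there are constants C and C_a, depending only on (a,) γ, ν₀, ν₁, such that for every multi-index α and every 0 < x ≤ 1: (i) ∫_{ζ₁>0} |φ_α(ζ)| ζ₁^{−1} e^{−ν(ζ)x/ζ₁} dζ ≤ C A_α (1+|ln x|); (ii) sup_{ζ₁>0} (1+|ζ|)^a |φ_α(ζ)| ζ₁^{−1} e^{−ν(ζ)x/ζ₁} ≤ C_a A_α x^{−1}; (iii) (∫_{ζ₁>0} |φ_α(ζ)|² ζ₁^{−2} e^{−2ν(ζ)x/ζ₁} dζ)^{1/2} ≤ C A_α x^{−1/2}(1+|ln x|)^{1/2}. -/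

import Mathlib

open MeasureTheory Real Set

noncomputable section

/-- Euclidean norm of a point of ℝ³ (written in coordinates). -/
def enr (ζ : Fin 3 → ℝ) : ℝ := Real.sqrt (ζ 0 ^ 2 + ζ 1 ^ 2 + ζ 2 ^ 2)

/-- The weight functions φ_α(ζ) = π^{-3/4} ζ₁^{α₁} ζ₂^{α₂} ζ₃^{α₃} e^{-|ζ|²/2}. -/
def phiα (α : Fin 3 → ℕ) (ζ : Fin 3 → ℝ) : ℝ :=
  Real.pi ^ (-(3 : ℝ) / 4) * ζ 0 ^ (α 0) * ζ 1 ^ (α 1) * ζ 2 ^ (α 2) *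
    Real.exp (-(enr ζ) ^ 2 / 2)

/-- A_α = (2α₁)^{α₁/2}(2α₂)^{α₂/2}(2α₃)^{α₃/2} e^{-(α₁+α₂+α₃)/2} (with 0⁰ = 1). -/
def Aα (α : Fin 3 → ℕ) : ℝ :=
  (2 * (α 0 : ℝ)) ^ ((α 0 : ℝ) / 2) * (2 * (α 1 : ℝ)) ^ ((α 1 : ℝ) / 2) *
    (2 * (α 2 : ℝ)) ^ ((α 2 : ℝ) / 2) *
    Real.exp (-((α 0 : ℝ) + (α 1 : ℝ) + (α 2 : ℝ)) / 2)

/-- The integral operator K(g)(ζ) = ∫ k(ζ,ζ*) g(ζ*) dζ*. -/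
def Kop (k : (Fin 3 → ℝ) → (Fin 3 → ℝ) → ℝ) (g : (Fin 3 → ℝ) → ℝ) (ζ : Fin 3 → ℝ) : ℝ :=
  ∫ ζs, k ζ ζs * g ζs

/-- The norm ‖g‖_* = (∫ g(ζ)² ν(ζ) dζ)^{1/2}. -/
def starNorm (ν : (Fin 3 → ℝ) → ℝ) (g : (Fin 3 → ℝ) → ℝ) : ℝ :=
  Real.sqrt (∫ ζ, (g ζ) ^ 2 * ν ζ)

/-- Mild (integral-equation) solution of ζ₁ ∂ₓ f = -ν f + K(f) on [0, l]. -/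
def MildSolution (l : ℝ) (ν : (Fin 3 → ℝ) → ℝ)
    (k : (Fin 3 → ℝ) → (Fin 3 → ℝ) → ℝ) (f : ℝ → (Fin 3 → ℝ) → ℝ) : Prop :=
  (∀ x ∈ Icc (0 : ℝ) l, ∀ ζ : Fin 3 → ℝ, 0 < ζ 0 →
    f x ζ = Real.exp (-(ν ζ * x) / |ζ 0|) * f 0 ζ +
      ∫ s in (0 : ℝ)..x, (1 / |ζ 0|) * Real.exp (-(ν ζ * (x - s)) / |ζ 0|) * Kop k (f s) ζ) ∧
  (∀ x ∈ Icc (0 : ℝ) l, ∀ ζ : Fin 3 → ℝ, ζ 0 < 0 →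
    f x ζ = Real.exp (-(ν ζ * (l - x)) / |ζ 0|) * f l ζ +
      ∫ s in x..l, (1 / |ζ 0|) * Real.exp (-(ν ζ * (s - x)) / |ζ 0|) * Kop k (f s) ζ)

/-!
Each factor of `φ_α` obeys `|t|ⁿ e^{-t²/4} ≤ (2n)^{n/2} e^{-n/2}` (the maximum of `s^p e^{-s}` is at
`s = p`), so `|φ_α(ζ)| ≤ A_α ∏ e^{-ζᵢ²/4}`. Since `ν ≥ ν₀`, the factor `ζ₁⁻¹ e^{-ν x/ζ₁}` is at most
`ζ₁⁻¹ e^{-ν₀ x/ζ₁} ≤ (ν₀ x)⁻¹`, which gives (ii). For (i) the dominating function factorises, and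
the only non-Gaussian factor `∫₀^∞ t⁻¹ e^{-t²/4} e^{-ν₀ x/t} dt` is split at `x` and `1` into pieces
bounded by `ν₀⁻²` (from `e^{-s} ≤ 2/s²`), `|ln x|` and `4`. For (iii) the squared integrand is at
most `A_α (ν₀ x)⁻¹` times the integrand of (i).
-/

lemma rpow_mul_exp_neg_le {s p : ℝ} (hs : 0 ≤ s) (hp : 0 ≤ p) :
    s ^ p * exp (-s) ≤ p ^ p * exp (-p) := by
  rcases hp.eq_or_lt with rfl | hp
  · simpa using hs
  have h := rpow_le_rpow (div_nonneg hs hp.le)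
    (by simpa using add_one_le_exp (s / p - 1)) hp.le
  rw [div_rpow hs hp.le, ← exp_mul, div_le_iff₀ (by positivity),
    show (s / p - 1) * p = s - p by field_simp] at h
  calc s ^ p * exp (-s) ≤ exp (s - p) * p ^ p * exp (-s) := by gcongr
    _ = p ^ p * exp (-p) := by rw [mul_comm (exp _), mul_assoc, ← exp_add]; ring_nf

lemma abs_pow_mul_exp_neg_sq_div_four_le (n : ℕ) (t : ℝ) :
    |t| ^ n * exp (-t ^ 2 / 4) ≤ (2 * (n : ℝ)) ^ ((n : ℝ) / 2) * exp (-(n : ℝ) / 2) := by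
  have h4 : (0 : ℝ) ≤ 4 := by norm_num
  have habs : |t| ^ n = 4 ^ ((n : ℝ) / 2) * (t ^ 2 / 4) ^ ((n : ℝ) / 2) := by
    rw [← mul_rpow h4 (by positivity), mul_div_cancel₀ _ four_ne_zero, ← sq_abs, ← rpow_natCast,
      ← rpow_natCast |t| 2, ← rpow_mul (abs_nonneg t)]
    push_cast
    ring_nf
  have hn : (2 * (n : ℝ)) ^ ((n : ℝ) / 2) = 4 ^ ((n : ℝ) / 2) * ((n : ℝ) / 2) ^ ((n : ℝ) / 2) := by
    rw [← mul_rpow h4 (by positivity)]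
    ring_nf
  rw [habs, hn, neg_div, neg_div, mul_assoc, mul_assoc]
  exact mul_le_mul_of_nonneg_left (rpow_mul_exp_neg_le (by positivity) (by positivity))
    (by positivity)

lemma exp_neg_le_two_div_sq {s : ℝ} (hs : 0 < s) : exp (-s) ≤ 2 / s ^ 2 := by
  rw [exp_neg, inv_le_comm₀ (exp_pos s) (by positivity), inv_div]
  nlinarith [quadratic_le_exp_of_nonneg hs.le]

lemma inv_mul_exp_neg_div_le {c t : ℝ} (hc : 0 < c) (ht : 0 < t) :
    t⁻¹ * exp (-c / t) ≤ c⁻¹ := by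
  have h : c / t ≤ exp (c / t) := by linarith [add_one_le_exp (c / t)]
  calc t⁻¹ * exp (-c / t) = c / t / exp (c / t) * c⁻¹ := by
        rw [neg_div, exp_neg]; field_simp
    _ ≤ 1 * c⁻¹ := by gcongr; exact div_le_one_of_le₀ h (exp_pos _).le
    _ = c⁻¹ := one_mul _

lemma integral_exp_neg_sq_div_four_le : ∫ t : ℝ, exp (-t ^ 2 / 4) ≤ 4 := by
  simp_rw [neg_div, div_eq_inv_mul, ← neg_mul]
  rw [integral_gaussian, show π / 4⁻¹ = (4 * π) by ring]
  calc √(4 * π) ≤ √(4 ^ 2) := sqrt_le_sqrt (by nlinarith [pi_le_four])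
    _ = 4 := sqrt_sq (by norm_num)

lemma integrable_exp_neg_sq_div_four : Integrable fun t : ℝ => exp (-t ^ 2 / 4) := by
  simpa [neg_div, div_eq_inv_mul] using integrable_exp_neg_mul_sq (b := 4⁻¹) (by norm_num)

section HalfLineKernel

variable {c x : ℝ}

lemma integrableOn_inv_mul_exp_neg_div (hc : 0 < c) :
    IntegrableOn (fun t : ℝ => t⁻¹ * exp (-t ^ 2 / 4) * exp (-c / t)) (Ioi 0) := by
  refine Integrable.mono' (integrable_exp_neg_sq_div_four.const_mul c⁻¹).integrableOn
    (by fun_prop : Measurable _).aestronglyMeasurable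
    ((ae_restrict_iff' measurableSet_Ioi).2 (.of_forall fun t (ht : 0 < t) => ?_))
  rw [norm_of_nonneg (by positivity)]
  calc t⁻¹ * exp (-t ^ 2 / 4) * exp (-c / t) = t⁻¹ * exp (-c / t) * exp (-t ^ 2 / 4) := by ring
    _ ≤ c⁻¹ * exp (-t ^ 2 / 4) := by gcongr; exact inv_mul_exp_neg_div_le hc ht

lemma setIntegral_Ioc_zero_inv_mul_exp_neg_div_le (hc : 0 < c) (hx : 0 < x) :
    ∫ t in Ioc 0 x, t⁻¹ * exp (-t ^ 2 / 4) * exp (-c / t) ≤ x ^ 2 / c ^ 2 := by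
  calc ∫ t in Ioc 0 x, t⁻¹ * exp (-t ^ 2 / 4) * exp (-c / t)
      ≤ ∫ t in Ioc 0 x, 2 / c ^ 2 * t := by
        refine setIntegral_mono_on ((integrableOn_inv_mul_exp_neg_div hc).mono_set
          Ioc_subset_Ioi_self) (by fun_prop : Continuous _).integrableOn_Ioc measurableSet_Ioc
          fun t ht => ?_
        have ht0 : 0 < t := ht.1
        calc t⁻¹ * exp (-t ^ 2 / 4) * exp (-c / t) ≤ t⁻¹ * 1 * (2 / (c / t) ^ 2) := by
              gcongr
              · exact exp_le_one_iff.2 (by nlinarith)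
              · rw [neg_div]; exact exp_neg_le_two_div_sq (by positivity)
          _ = 2 / c ^ 2 * t := by field_simp
    _ = x ^ 2 / c ^ 2 := by
        rw [integral_const_mul, ← intervalIntegral.integral_of_le hx.le, integral_id]
        ring

lemma setIntegral_Ioc_one_inv_mul_exp_neg_div_le (hc : 0 < c) (hx : 0 < x) (hx1 : x ≤ 1) :
    ∫ t in Ioc x 1, t⁻¹ * exp (-t ^ 2 / 4) * exp (-c / t) ≤ -log x := by
  have hinv : IntervalIntegrable (fun t : ℝ => t⁻¹) volume x 1 :=
    intervalIntegral.intervalIntegrable_inv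
      (fun t ht => (hx.trans_le (uIcc_of_le hx1 ▸ ht).1).ne') continuousOn_id
  calc ∫ t in Ioc x 1, t⁻¹ * exp (-t ^ 2 / 4) * exp (-c / t) ≤ ∫ t in Ioc x 1, t⁻¹ := by
        refine setIntegral_mono_on ((integrableOn_inv_mul_exp_neg_div hc).mono_set
          fun t ht => hx.trans ht.1) hinv.1 measurableSet_Ioc fun t ht => ?_
        have ht0 : 0 < t := hx.trans ht.1
        calc t⁻¹ * exp (-t ^ 2 / 4) * exp (-c / t) ≤ t⁻¹ * 1 * 1 := by
              gcongr
              · exact exp_le_one_iff.2 (by nlinarith)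
              · exact exp_le_one_iff.2 (div_nonpos_of_nonpos_of_nonneg (by linarith) ht0.le)
          _ = t⁻¹ := by ring
    _ = -log x := by
        rw [← intervalIntegral.integral_of_le hx1, integral_inv_of_pos hx one_pos, one_div,
          log_inv]

lemma setIntegral_Ioi_one_inv_mul_exp_neg_div_le (hc : 0 < c) :
    ∫ t in Ioi 1, t⁻¹ * exp (-t ^ 2 / 4) * exp (-c / t) ≤ 4 := by
  calc ∫ t in Ioi 1, t⁻¹ * exp (-t ^ 2 / 4) * exp (-c / t) ≤ ∫ t in Ioi 1, exp (-t ^ 2 / 4) := by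
        refine setIntegral_mono_on ((integrableOn_inv_mul_exp_neg_div hc).mono_set
          (Ioi_subset_Ioi zero_le_one)) integrable_exp_neg_sq_div_four.integrableOn
          measurableSet_Ioi fun t (ht : 1 < t) => ?_
        calc t⁻¹ * exp (-t ^ 2 / 4) * exp (-c / t) ≤ 1 * exp (-t ^ 2 / 4) * 1 := by
              gcongr
              · exact inv_le_one_of_one_le₀ ht.le
              · exact exp_le_one_iff.2 (div_nonpos_of_nonpos_of_nonneg (by linarith) (by linarith))
          _ = exp (-t ^ 2 / 4) := by ring
    _ ≤ ∫ t, exp (-t ^ 2 / 4) :=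
        setIntegral_le_integral integrable_exp_neg_sq_div_four (.of_forall fun _ => (exp_pos _).le)
    _ ≤ 4 := integral_exp_neg_sq_div_four_le

lemma setIntegral_Ioi_inv_mul_exp_neg_div_le (hc : 0 < c) (hx : 0 < x) (hx1 : x ≤ 1) :
    ∫ t in Ioi 0, t⁻¹ * exp (-t ^ 2 / 4) * exp (-c / t) ≤ x ^ 2 / c ^ 2 - log x + 4 := by
  have hint := integrableOn_inv_mul_exp_neg_div hc
  rw [← Ioc_union_Ioi_eq_Ioi hx.le, setIntegral_union (Ioc_disjoint_Ioi le_rfl) measurableSet_Ioi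
    (hint.mono_set Ioc_subset_Ioi_self) (hint.mono_set (Ioi_subset_Ioi hx.le)),
    ← Ioc_union_Ioi_eq_Ioi hx1, setIntegral_union (Ioc_disjoint_Ioi le_rfl) measurableSet_Ioi
    (hint.mono_set fun t ht => hx.trans ht.1) (hint.mono_set (Ioi_subset_Ioi zero_le_one))]
  linarith [setIntegral_Ioc_zero_inv_mul_exp_neg_div_le hc hx,
    setIntegral_Ioc_one_inv_mul_exp_neg_div_le hc hx hx1,
    setIntegral_Ioi_one_inv_mul_exp_neg_div_le hc]

end HalfLineKernel

lemma integral_fin_three_mul (f g h : ℝ → ℝ) :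
    ∫ ζ : Fin 3 → ℝ, f (ζ 0) * g (ζ 1) * h (ζ 2) = (∫ t, f t) * (∫ t, g t) * ∫ t, h t := by
  simpa [Fin.prod_univ_three] using integral_fintype_prod_volume_eq_prod (𝕜 := ℝ) ![f, g, h]

lemma integrable_fin_three_mul {f g h : ℝ → ℝ} (hf : Integrable f) (hg : Integrable g)
    (hh : Integrable h) : Integrable fun ζ : Fin 3 → ℝ => f (ζ 0) * g (ζ 1) * h (ζ 2) := by
  have := Integrable.fintype_prod (f := ![f, g, h]) (μ := fun _ => volume)
    fun i => by fin_cases i <;> assumption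
  rw [← volume_pi] at this
  simpa [Fin.prod_univ_three] using this

lemma setIntegral_le_integral_of_le {X : Type*} [MeasurableSpace X] {μ : Measure X} {s : Set X}
    (hs : MeasurableSet s) {f g : X → ℝ} (hg : Integrable g μ) (hg0 : 0 ≤ g)
    (hf : ∀ x ∈ s, 0 ≤ f x ∧ f x ≤ g x) : ∫ x in s, f x ∂μ ≤ ∫ x, g x ∂μ :=
  (integral_mono_of_nonneg ((ae_restrict_iff' hs).2 (.of_forall fun x hx => (hf x hx).1))
    hg.integrableOn ((ae_restrict_iff' hs).2 (.of_forall fun x hx => (hf x hx).2))).trans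
    (setIntegral_le_integral hg (.of_forall hg0))

lemma enr_nonneg (ζ : Fin 3 → ℝ) : 0 ≤ enr ζ := sqrt_nonneg _

lemma enr_sq (ζ : Fin 3 → ℝ) : enr ζ ^ 2 = ζ 0 ^ 2 + ζ 1 ^ 2 + ζ 2 ^ 2 := sq_sqrt (by positivity)

lemma Aα_nonneg (α : Fin 3 → ℕ) : 0 ≤ Aα α := by
  unfold Aα
  positivity

lemma Aα_eq (α : Fin 3 → ℕ) : Aα α =
    (2 * (α 0 : ℝ)) ^ ((α 0 : ℝ) / 2) * exp (-(α 0 : ℝ) / 2) *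
      ((2 * (α 1 : ℝ)) ^ ((α 1 : ℝ) / 2) * exp (-(α 1 : ℝ) / 2)) *
      ((2 * (α 2 : ℝ)) ^ ((α 2 : ℝ) / 2) * exp (-(α 2 : ℝ) / 2)) := by
  rw [Aα, show -((α 0 : ℝ) + α 1 + α 2) / 2 = -(α 0 : ℝ) / 2 + -(α 1 : ℝ) / 2 + -(α 2 : ℝ) / 2 by
    ring, exp_add, exp_add]
  ring

lemma abs_phiα_le (α : Fin 3 → ℕ) (ζ : Fin 3 → ℝ) :
    |phiα α ζ| ≤ Aα α * (exp (-ζ 0 ^ 2 / 4) * exp (-ζ 1 ^ 2 / 4) * exp (-ζ 2 ^ 2 / 4)) := by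
  have hπ : π ^ (-(3 : ℝ) / 4) ≤ 1 :=
    rpow_le_one_of_one_le_of_nonpos (by linarith [pi_gt_three]) (by norm_num)
  have hexp : exp (-enr ζ ^ 2 / 2) =
      exp (-ζ 0 ^ 2 / 4) * exp (-ζ 1 ^ 2 / 4) * exp (-ζ 2 ^ 2 / 4) *
        (exp (-ζ 0 ^ 2 / 4) * exp (-ζ 1 ^ 2 / 4) * exp (-ζ 2 ^ 2 / 4)) := by
    simp only [← exp_add, enr_sq]
    ring_nf
  calc |phiα α ζ| = π ^ (-(3 : ℝ) / 4) *
        (|ζ 0| ^ α 0 * exp (-ζ 0 ^ 2 / 4) * (|ζ 1| ^ α 1 * exp (-ζ 1 ^ 2 / 4)) *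
          (|ζ 2| ^ α 2 * exp (-ζ 2 ^ 2 / 4))) *
        (exp (-ζ 0 ^ 2 / 4) * exp (-ζ 1 ^ 2 / 4) * exp (-ζ 2 ^ 2 / 4)) := by
        rw [phiα, hexp]
        simp only [abs_mul, abs_pow, abs_exp, abs_of_pos (rpow_pos_of_pos pi_pos _)]
        ring
    _ ≤ 1 * ((2 * (α 0 : ℝ)) ^ ((α 0 : ℝ) / 2) * exp (-(α 0 : ℝ) / 2) *
          ((2 * (α 1 : ℝ)) ^ ((α 1 : ℝ) / 2) * exp (-(α 1 : ℝ) / 2)) *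
          ((2 * (α 2 : ℝ)) ^ ((α 2 : ℝ) / 2) * exp (-(α 2 : ℝ) / 2))) *
        (exp (-ζ 0 ^ 2 / 4) * exp (-ζ 1 ^ 2 / 4) * exp (-ζ 2 ^ 2 / 4)) := by
        gcongr ?_ * (?_ * ?_ * ?_) * _ <;> exact abs_pow_mul_exp_neg_sq_div_four_le _ _
    _ = _ := by rw [Aα_eq, one_mul]

lemma abs_phiα_le_exp_enr (α : Fin 3 → ℕ) (ζ : Fin 3 → ℝ) :
    |phiα α ζ| ≤ Aα α * exp (-enr ζ ^ 2 / 4) := by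
  convert abs_phiα_le α ζ using 2
  simp only [← exp_add, enr_sq]
  ring_nf

lemma one_add_rpow_mul_exp_neg_sq_le {a r : ℝ} (ha : 0 ≤ a) (hr : 0 ≤ r) :
    (1 + r) ^ a * exp (-r ^ 2 / 4) ≤ exp (a ^ 2) := by
  calc (1 + r) ^ a * exp (-r ^ 2 / 4) ≤ exp r ^ a * exp (-r ^ 2 / 4) := by
        gcongr
        linarith [add_one_le_exp r]
    _ = exp (a * r - r ^ 2 / 4) := by rw [← exp_mul, ← exp_add]; ring_nf
    _ ≤ exp (a ^ 2) := exp_le_exp.2 (by nlinarith [sq_nonneg (a - r / 2)])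

def dampedPhi (ν : (Fin 3 → ℝ) → ℝ) (α : Fin 3 → ℕ) (x : ℝ) (ζ : Fin 3 → ℝ) : ℝ :=
  |phiα α ζ| * (ζ 0)⁻¹ * exp (-(ν ζ * x) / ζ 0)

lemma dampedPhi_sq (ν : (Fin 3 → ℝ) → ℝ) (α : Fin 3 → ℕ) (x : ℝ) (ζ : Fin 3 → ℝ) :
    dampedPhi ν α x ζ ^ 2 = |phiα α ζ| ^ 2 * (ζ 0)⁻¹ ^ 2 * exp (-(2 * ν ζ * x) / ζ 0) := by
  rw [dampedPhi, mul_pow, mul_pow, ← exp_nat_mul]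
  ring_nf

section DampedPhi

variable {ν : (Fin 3 → ℝ) → ℝ} {ν₀ x : ℝ} (α : Fin 3 → ℕ)

lemma dampedPhi_le_exp_enr {ζ : Fin 3 → ℝ} (hν₀ : 0 < ν₀) (hν : ν₀ ≤ ν ζ) (hx : 0 < x)
    (hζ : 0 < ζ 0) : dampedPhi ν α x ζ ≤ Aα α * exp (-enr ζ ^ 2 / 4) * (ν₀ * x)⁻¹ := by
  have hA := Aα_nonneg α
  calc dampedPhi ν α x ζ
      ≤ Aα α * exp (-enr ζ ^ 2 / 4) * ((ζ 0)⁻¹ * exp (-(ν₀ * x) / ζ 0)) := by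
        rw [dampedPhi, mul_assoc]
        gcongr
        exact abs_phiα_le_exp_enr α ζ
    _ ≤ Aα α * exp (-enr ζ ^ 2 / 4) * (ν₀ * x)⁻¹ := by
        gcongr
        exact inv_mul_exp_neg_div_le (by positivity) hζ

lemma one_add_enr_rpow_mul_dampedPhi_le {ζ : Fin 3 → ℝ} {a : ℝ} (ha : 0 ≤ a) (hν₀ : 0 < ν₀)
    (hν : ν₀ ≤ ν ζ) (hx : 0 < x) (hζ : 0 < ζ 0) :
    (1 + enr ζ) ^ a * dampedPhi ν α x ζ ≤ exp (a ^ 2) * Aα α * (ν₀ * x)⁻¹ := by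
  have hA := Aα_nonneg α
  calc (1 + enr ζ) ^ a * dampedPhi ν α x ζ
      ≤ (1 + enr ζ) ^ a * (Aα α * exp (-enr ζ ^ 2 / 4) * (ν₀ * x)⁻¹) := by
        have := enr_nonneg ζ
        gcongr
        exact dampedPhi_le_exp_enr α hν₀ hν hx hζ
    _ = (1 + enr ζ) ^ a * exp (-enr ζ ^ 2 / 4) * Aα α * (ν₀ * x)⁻¹ := by ring
    _ ≤ exp (a ^ 2) * Aα α * (ν₀ * x)⁻¹ := by
        gcongr
        exact one_add_rpow_mul_exp_neg_sq_le ha (enr_nonneg ζ)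

lemma dampedPhi_le_mul {ζ : Fin 3 → ℝ} (hν : ν₀ ≤ ν ζ) (hx : 0 ≤ x) (hζ : 0 < ζ 0) :
    dampedPhi ν α x ζ ≤ Aα α * ((ζ 0)⁻¹ * exp (-ζ 0 ^ 2 / 4) * exp (-(ν₀ * x) / ζ 0) *
      exp (-ζ 1 ^ 2 / 4) * exp (-ζ 2 ^ 2 / 4)) := by
  have hA := Aα_nonneg α
  calc dampedPhi ν α x ζ ≤ Aα α * (exp (-ζ 0 ^ 2 / 4) * exp (-ζ 1 ^ 2 / 4) *
        exp (-ζ 2 ^ 2 / 4)) * (ζ 0)⁻¹ * exp (-(ν₀ * x) / ζ 0) := by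
        rw [dampedPhi]
        gcongr
        exact abs_phiα_le α ζ
    _ = _ := by ring

lemma setIntegral_le_of_le_mul_dampedPhi (hν₀ : 0 < ν₀) (hν : ∀ ζ, ν₀ ≤ ν ζ) (hx : 0 < x)
    (hx1 : x ≤ 1) {K : ℝ} (hK : 0 ≤ K) {f : (Fin 3 → ℝ) → ℝ}
    (hf : ∀ ζ, 0 < ζ 0 → 0 ≤ f ζ ∧ f ζ ≤ K * dampedPhi ν α x ζ) :
    ∫ ζ in {ζ : Fin 3 → ℝ | 0 < ζ 0}, f ζ ≤
      K * Aα α * (16 * (ν₀⁻¹ ^ 2 + 5) * (1 + |log x|)) := by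
  set g₀ := (Ioi (0 : ℝ)).indicator fun t => t⁻¹ * exp (-t ^ 2 / 4) * exp (-(ν₀ * x) / t)
  have hg₀ : 0 ≤ g₀ := indicator_nonneg fun t (ht : 0 < t) => by positivity
  have hg₀_int : Integrable g₀ :=
    (integrableOn_inv_mul_exp_neg_div (mul_pos hν₀ hx)).integrable_indicator measurableSet_Ioi
  have hg₀_le : ∫ t, g₀ t ≤ ν₀⁻¹ ^ 2 + 4 + |log x| := by
    -- splitting the half-line at `x` makes the first piece `x²/(ν₀ x)² = ν₀⁻²` uniform in `x`
    have h := setIntegral_Ioi_inv_mul_exp_neg_div_le (mul_pos hν₀ hx) hx hx1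
    rw [show x ^ 2 / (ν₀ * x) ^ 2 = ν₀⁻¹ ^ 2 by field_simp] at h
    rw [integral_indicator measurableSet_Ioi]
    linarith [neg_le_abs (log x)]
  have hA := Aα_nonneg α
  have hgauss := integrable_exp_neg_sq_div_four
  have hgauss_nonneg : 0 ≤ ∫ t : ℝ, exp (-t ^ 2 / 4) := integral_nonneg fun _ => (exp_pos _).le
  calc ∫ ζ in {ζ : Fin 3 → ℝ | 0 < ζ 0}, f ζ
      ≤ ∫ ζ : Fin 3 → ℝ, K * Aα α * (g₀ (ζ 0) * exp (-ζ 1 ^ 2 / 4) * exp (-ζ 2 ^ 2 / 4)) := by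
        refine setIntegral_le_integral_of_le
          (measurableSet_lt measurable_const (measurable_pi_apply 0))
          ((integrable_fin_three_mul hg₀_int hgauss hgauss).const_mul _)
          (fun ζ => by have : 0 ≤ g₀ (ζ 0) := hg₀ _; positivity)
          fun ζ (hζ : 0 < ζ 0) => ⟨(hf ζ hζ).1, ?_⟩
        simp only [g₀, indicator_of_mem (mem_Ioi.2 hζ), mul_assoc K]
        exact (hf ζ hζ).2.trans (mul_le_mul_of_nonneg_left (dampedPhi_le_mul α (hν ζ) hx.le hζ) hK)
    _ = K * Aα α * ((∫ t, g₀ t) * (∫ t, exp (-t ^ 2 / 4)) * ∫ t, exp (-t ^ 2 / 4)) := by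
        rw [integral_const_mul, integral_fin_three_mul g₀ (fun t => exp (-t ^ 2 / 4))
          (fun t => exp (-t ^ 2 / 4))]
    _ ≤ K * Aα α * ((ν₀⁻¹ ^ 2 + 4 + |log x|) * 4 * 4) := by
        have : 0 ≤ ∫ t, g₀ t := integral_nonneg hg₀
        gcongr
        all_goals exact integral_exp_neg_sq_div_four_le
    _ ≤ K * Aα α * (16 * (ν₀⁻¹ ^ 2 + 5) * (1 + |log x|)) :=
        mul_le_mul_of_nonneg_left (by nlinarith [abs_nonneg (log x), sq_nonneg ν₀⁻¹])
          (by positivity)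

lemma setIntegral_dampedPhi_le (hν₀ : 0 < ν₀) (hν : ∀ ζ, ν₀ ≤ ν ζ) (hx : 0 < x) (hx1 : x ≤ 1) :
    ∫ ζ in {ζ : Fin 3 → ℝ | 0 < ζ 0}, dampedPhi ν α x ζ ≤
      16 * (ν₀⁻¹ ^ 2 + 5) * Aα α * (1 + |log x|) :=
  (setIntegral_le_of_le_mul_dampedPhi α hν₀ hν hx hx1 zero_le_one
    fun ζ (hζ : 0 < ζ 0) => ⟨by unfold dampedPhi; positivity, (one_mul _).ge⟩).trans_eq (by ring)

lemma setIntegral_dampedPhi_sq_le (hν₀ : 0 < ν₀) (hν : ∀ ζ, ν₀ ≤ ν ζ) (hx : 0 < x)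
    (hx1 : x ≤ 1) :
    ∫ ζ in {ζ : Fin 3 → ℝ | 0 < ζ 0}, dampedPhi ν α x ζ ^ 2 ≤
      16 * (ν₀⁻¹ ^ 2 + 5) * ν₀⁻¹ * Aα α ^ 2 * x⁻¹ * (1 + |log x|) := by
  have hA := Aα_nonneg α
  refine (setIntegral_le_of_le_mul_dampedPhi α hν₀ hν hx hx1 (K := Aα α * (ν₀ * x)⁻¹)
    (by positivity) fun ζ hζ => ?_).trans_eq (by rw [mul_inv]; ring)
  have h0 : 0 ≤ dampedPhi ν α x ζ := by unfold dampedPhi; positivity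
  have h1 : dampedPhi ν α x ζ ≤ Aα α * (ν₀ * x)⁻¹ := by
    simpa only [rpow_zero, one_mul, zero_pow two_ne_zero, exp_zero] using
      one_add_enr_rpow_mul_dampedPhi_le α le_rfl hν₀ (hν ζ) hx hζ
  exact ⟨sq_nonneg _, (sq _).trans_le (mul_le_mul_of_nonneg_right h1 h0)⟩

end DampedPhi

lemma sqrt_le_mul_rpow_neg_half_mul_rpow_half {I K x L : ℝ} (hK : 0 ≤ K) (hx : 0 < x)
    (hL : 0 ≤ L) (h : I ≤ K ^ 2 * x⁻¹ * L) :
    √I ≤ K * x ^ (-(1 : ℝ) / 2) * L ^ ((1 : ℝ) / 2) := by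
  rw [neg_div, rpow_neg hx.le, ← sqrt_eq_rpow, ← sqrt_eq_rpow, ← sqrt_inv]
  calc √I ≤ √(K ^ 2 * x⁻¹ * L) := sqrt_le_sqrt h
    _ = K * √x⁻¹ * √L := by rw [sqrt_mul' _ hL, sqrt_mul' _ (inv_nonneg.2 hx.le), sqrt_sq hK]

theorem stmt13_general (γ ν₀ ν₁ a : ℝ) (hγ0 : 0 < γ) (hν₀ : 0 < ν₀) (ha : 0 ≤ a) :
    ∃ C > (0 : ℝ), ∃ Ca > (0 : ℝ), ∀ ν : (Fin 3 → ℝ) → ℝ, Measurable ν →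
      (∀ ζ, ν₀ * (1 + enr ζ) ^ γ ≤ ν ζ ∧ ν ζ ≤ ν₁ * (1 + enr ζ) ^ γ) →
      ∀ (α : Fin 3 → ℕ) (x : ℝ), 0 < x → x ≤ 1 →
        ((∫ ζ in {ζ : Fin 3 → ℝ | 0 < ζ 0},
            |phiα α ζ| * (ζ 0)⁻¹ * Real.exp (-(ν ζ * x) / ζ 0)) ≤ C * Aα α * (1 + |Real.log x|))
        ∧ (∀ ζ : Fin 3 → ℝ, 0 < ζ 0 →
            (1 + enr ζ) ^ a * |phiα α ζ| * (ζ 0)⁻¹ * Real.exp (-(ν ζ * x) / ζ 0) ≤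
              Ca * Aα α * x⁻¹)
        ∧ Real.sqrt (∫ ζ in {ζ : Fin 3 → ℝ | 0 < ζ 0},
            |phiα α ζ| ^ 2 * (ζ 0)⁻¹ ^ 2 * Real.exp (-(2 * ν ζ * x) / ζ 0)) ≤
            C * Aα α * x ^ (-(1 : ℝ) / 2) * (1 + |Real.log x|) ^ ((1 : ℝ) / 2) := by
  set M := 16 * (ν₀⁻¹ ^ 2 + 5)
  have hq := inv_pos.2 hν₀
  have hM : 1 ≤ M := by nlinarith [sq_nonneg ν₀⁻¹]
  refine ⟨M * (1 + ν₀⁻¹), by positivity, exp (a ^ 2) * ν₀⁻¹, by positivity,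
    fun ν _ hν α x hx hx1 => ?_⟩
  have hν₀ν (ζ : Fin 3 → ℝ) : ν₀ ≤ ν ζ :=
    (le_mul_of_one_le_right hν₀.le (one_le_rpow (by linarith [enr_nonneg ζ]) hγ0.le)).trans (hν ζ).1
  have hA := Aα_nonneg α
  refine ⟨?_, fun ζ hζ => ?_, ?_⟩
  · refine (setIntegral_dampedPhi_le α hν₀ hν₀ν hx hx1).trans ?_
    gcongr ?_ * _ * _
    exact le_mul_of_one_le_right (by positivity) (by linarith)
  · calc _ = (1 + enr ζ) ^ a * dampedPhi ν α x ζ := by simp only [dampedPhi, mul_assoc]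
      _ ≤ exp (a ^ 2) * Aα α * (ν₀ * x)⁻¹ :=
        one_add_enr_rpow_mul_dampedPhi_le α ha hν₀ (hν₀ν ζ) hx hζ
      _ = _ := by rw [mul_inv]; ring
  · refine sqrt_le_mul_rpow_neg_half_mul_rpow_half (by positivity) hx (by positivity) ?_
    simp only [← dampedPhi_sq]
    refine (setIntegral_dampedPhi_sq_le α hν₀ hν₀ν hx hx1).trans ?_
    rw [mul_pow]
    gcongr ?_ * _ * _ * _
    nlinarith

/-- the L¹, weighted L^∞ and L² bounds for φ_α ζ₁⁻¹ e^{-ν x/ζ₁} on {ζ₁>0}: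
(i) L¹ norm ≤ C A_α (1+|ln x|); (ii) ‖·‖_{L^∞_a} ≤ C_a A_α x⁻¹;
(iii) L² norm ≤ C A_α x^{-1/2}(1+|ln x|)^{1/2}. -/
theorem stmt13 (γ ν₀ ν₁ a : ℝ) (hγ0 : 0 < γ) (hγ1 : γ ≤ 1) (hν₀ : 0 < ν₀) (hν₀₁ : ν₀ < ν₁)
    (ha : 0 ≤ a) :
    ∃ C > (0 : ℝ), ∃ Ca > (0 : ℝ), ∀ ν : (Fin 3 → ℝ) → ℝ, Measurable ν →
      (∀ ζ, ν₀ * (1 + enr ζ) ^ γ ≤ ν ζ ∧ ν ζ ≤ ν₁ * (1 + enr ζ) ^ γ) →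
      ∀ (α : Fin 3 → ℕ) (x : ℝ), 0 < x → x ≤ 1 →
        ((∫ ζ in {ζ : Fin 3 → ℝ | 0 < ζ 0},
            |phiα α ζ| * (ζ 0)⁻¹ * Real.exp (-(ν ζ * x) / ζ 0)) ≤ C * Aα α * (1 + |Real.log x|))
        ∧ (∀ ζ : Fin 3 → ℝ, 0 < ζ 0 →
            (1 + enr ζ) ^ a * |phiα α ζ| * (ζ 0)⁻¹ * Real.exp (-(ν ζ * x) / ζ 0) ≤
              Ca * Aα α * x⁻¹)
        ∧ Real.sqrt (∫ ζ in {ζ : Fin 3 → ℝ | 0 < ζ 0},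
            |phiα α ζ| ^ 2 * (ζ 0)⁻¹ ^ 2 * Real.exp (-(2 * ν ζ * x) / ζ 0)) ≤
            C * Aα α * x ^ (-(1 : ℝ) / 2) * (1 + |Real.log x|) ^ ((1 : ℝ) / 2) :=
  stmt13_general γ ν₀ ν₁ a hγ0 hν₀ ha
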